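/- For n ≥ 4 and a ≠ 0, the semisimple part S = (2a)^{−(n−3)}·Y1^{n−2} of Y1 does not belong to the Lie subalgebra of gl(n+1, ℂ) generated by Y1 and Y2 (the Lie span of {Y1, Y2}); consequently this n-dimensional nilpotent Lie subalgebra is not closed under Chevalley–Jordan decomposition. -/

import Mathlib

open Matrix
open Fin.NatCast

attribute [local instance 100] LieRing.ofAssociativeRing

noncomputable section

/-- The (n+1)×(n+1) matrix unit `E i j` (with 0-based indices). -/
def E (n : ℕ) (i j : Fin (n+1)) : Matrix (Fin (n+1)) (Fin (n+1)) ℂ :=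
  Matrix.single i j 1

/-- Y1 = a·(E₁₁+E₁₂+E₂₁+E₂₂) + E_{1,n+1} + Σ_{k=4}^{n} ((k−3)/(k−2))·E_{k,k−1}
    + α·E_{n,1} + β·E_{n,2}  (1-based indexing). -/
def Y1 (n : ℕ) (a α β : ℂ) : Matrix (Fin (n+1)) (Fin (n+1)) ℂ :=
  a • (E n 0 0 + E n 0 1 + E n 1 0 + E n 1 1) + E n 0 (Fin.last n)
    + ∑ k ∈ Finset.Icc 4 n, (((k : ℂ) - 3) / ((k : ℂ) - 2)) • E n (↑(k-1)) (↑(k-2))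
    + α • E n (↑(n-1)) 0 + β • E n (↑(n-1)) 1

/-- Y2 = a·(E₁₁+E₁₂+E₂₁+E₂₂) + E_{2,n+1} − E_{3,1} + E_{3,2}
    + Σ_{k=4}^{n} (1/(k−2))·E_{k,k−1} + β·E_{n,1} + α·E_{n,2}  (1-based indexing). -/
def Y2 (n : ℕ) (a α β : ℂ) : Matrix (Fin (n+1)) (Fin (n+1)) ℂ :=
  a • (E n 0 0 + E n 0 1 + E n 1 0 + E n 1 1) + E n 1 (Fin.last n)
    - E n 2 0 + E n 2 1
    + ∑ k ∈ Finset.Icc 4 n, (1 / ((k : ℂ) - 2)) • E n (↑(k-1)) (↑(k-2))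
    + β • E n (↑(n-1)) 0 + α • E n (↑(n-1)) 1

/-!
Let `f = e₁ + e₂ + (2a)⁻¹ e_{n+1}` (row vector, 1-based indices) and let `𝔨` be the Lie algebra
of matrices `X` with `f X = λ(X) f` that send each `e_j`, `3 ≤ j ≤ n`, into the span of the
`e_i` with `j < i ≤ n`. A product of two elements of `𝔨` pushes `e₃` at least two steps down, so
its `(4, 3)` entry vanishes; and `λ` is multiplicative on `𝔨`. Hence `X ↦ 4a X₄₃ - λ(X)` kills
`⁅𝔨, 𝔨⁆`, and its kernel in `𝔨` is a Lie subalgebra. It contains `Y1` and `Y2` (entry `1/2`,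
eigenvalue `2a`), hence their Lie span. But `S = (2a)^{-(n-3)} Y1^{n-2}` has `λ(S) = 2a`, while
`S₄₃ = 0` because `S` is a multiple of a product of `n - 2 ≥ 2` elements of `𝔨`.
Below, indices are 0-based as in `E`, so `X₄₃` is `X 3 2`.
-/

namespace Matrix

variable {ι R : Type*} [Fintype ι] [CommRing R]

section StrictLowerOn

variable [LinearOrder ι] {J : Set ι} {X Y : Matrix ι ι R}

/-- `X` maps the span of the basis vectors `e j`, `j ∈ J`, into itself, strictly
lower-triangularly: column `j ∈ J` of `X` is supported on the rows `i ∈ J` with `j < i`. -/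
def IsStrictLowerOn (J : Set ι) (X : Matrix ι ι R) : Prop :=
  ∀ i, ∀ j ∈ J, ¬ (i ∈ J ∧ j < i) → X i j = 0

theorem IsStrictLowerOn.mul_apply_eq_zero (hX : X.IsStrictLowerOn J) (hY : Y.IsStrictLowerOn J)
    {i j : ι} (hj : j ∈ J) (hij : ∀ k ∈ J, j < k → ¬ (i ∈ J ∧ k < i)) :
    (X * Y) i j = 0 := by
  rw [mul_apply]
  refine Finset.sum_eq_zero fun k _ => ?_
  by_cases hk : k ∈ J ∧ j < k
  · rw [hX i k hk.1 (hij k hk.1 hk.2), zero_mul]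
  · rw [hY k j hj hk, mul_zero]

theorem IsStrictLowerOn.mul (hX : X.IsStrictLowerOn J) (hY : Y.IsStrictLowerOn J) :
    (X * Y).IsStrictLowerOn J :=
  fun _ _ hj hij => hX.mul_apply_eq_zero hY hj fun _ _ hjk hik => hij ⟨hik.1, hjk.trans hik.2⟩

theorem IsStrictLowerOn.pow (hX : X.IsStrictLowerOn J) :
    ∀ {m : ℕ}, m ≠ 0 → (X ^ m).IsStrictLowerOn J
  | 1, _ => by rwa [pow_one]
  | m + 2, _ => by rw [pow_succ]; exact (hX.pow m.succ_ne_zero).mul hX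

variable (R) in
def strictLowerOnLieSubalgebra (J : Set ι) : LieSubalgebra R (Matrix ι ι R) where
  carrier := {X | X.IsStrictLowerOn J}
  zero_mem' _ _ _ _ := rfl
  add_mem' hX hY i j hj hij := by rw [add_apply, hX i j hj hij, hY i j hj hij, add_zero]
  smul_mem' c _ hX i j hj hij := by rw [smul_apply, hX i j hj hij, smul_zero]
  lie_mem' hX hY i j hj hij := by
    rw [Ring.lie_def, sub_apply, hX.mul hY i j hj hij, hY.mul hX i j hj hij, sub_zero]

end StrictLowerOn

section LeftEigenvector

variable [DecidableEq ι] {v : ι → R} {X Y : Matrix ι ι R} {c d : R}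

theorem vecMul_pow_of_vecMul_eq_smul (hX : v ᵥ* X = c • v) (m : ℕ) :
    v ᵥ* X ^ m = c ^ m • v := by
  induction m with
  | zero => rw [pow_zero, pow_zero, vecMul_one, one_smul]
  | succ m ih => rw [pow_succ, ← vecMul_vecMul, ih, smul_vecMul, hX, smul_smul, pow_succ]

theorem vecMul_lie_eq_zero (hX : v ᵥ* X = c • v) (hY : v ᵥ* Y = d • v) :
    v ᵥ* ⁅X, Y⁆ = 0 := by
  rw [Ring.lie_def, vecMul_sub, ← vecMul_vecMul, ← vecMul_vecMul, hX, hY, smul_vecMul,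
    smul_vecMul, hX, hY, smul_smul, smul_smul, mul_comm, sub_self]

variable (v) in
def leftEigenSubalgebra : Subalgebra R (Matrix ι ι R) where
  carrier := {X | ∃ c : R, v ᵥ* X = c • v}
  mul_mem' := by
    rintro X Y ⟨c, hX⟩ ⟨d, hY⟩
    exact ⟨c * d, by rw [← vecMul_vecMul, hX, smul_vecMul, hY, smul_smul]⟩
  add_mem' := by
    rintro X Y ⟨c, hX⟩ ⟨d, hY⟩
    exact ⟨c + d, by rw [vecMul_add, hX, hY, add_smul]⟩
  algebraMap_mem' r := ⟨r, by rw [Algebra.algebraMap_eq_smul_one, vecMul_smul, vecMul_one]⟩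

end LeftEigenvector

end Matrix

namespace LieSubalgebra

variable {R L M : Type*} [CommRing R] [LieRing L] [LieAlgebra R L] [AddCommGroup M] [Module R M]

def restrictKer (K : LieSubalgebra R L) (φ : L →ₗ[R] M)
    (hφ : ∀ x ∈ K, ∀ y ∈ K, φ ⁅x, y⁆ = 0) : LieSubalgebra R L where
  carrier := {x | x ∈ K ∧ φ x = 0}
  zero_mem' := ⟨K.zero_mem, map_zero φ⟩
  add_mem' hx hy := ⟨K.add_mem hx.1 hy.1, by rw [map_add, hx.2, hy.2, add_zero]⟩
  smul_mem' c _ hx := ⟨K.smul_mem c hx.1, by rw [map_smul, hx.2, smul_zero]⟩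
  lie_mem' hx hy := ⟨K.lie_mem hx.1 hy.1, hφ _ hx.1 _ hy.1⟩

end LieSubalgebra

namespace SemisimplePartNotInLieSpan

variable {n : ℕ} {a α β : ℂ}

lemma E_apply (r s i j : Fin (n+1)) :
    E n r s i j = if (r : ℕ) = i ∧ (s : ℕ) = j then 1 else 0 := by
  simp [E, Matrix.single_apply, Fin.ext_iff]

lemma sum_Icc_smul_E_apply (c : ℕ → ℂ) (i j : Fin (n+1)) :
    (∑ k ∈ Finset.Icc 4 n, c k • E n (↑(k-1)) (↑(k-2))) i j
      = if 3 ≤ (i : ℕ) ∧ (i : ℕ) < n ∧ (j : ℕ) + 1 = i then c (i + 1) else 0 := by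
  have hi := i.isLt
  rw [Matrix.sum_apply, Finset.sum_congr rfl (g := fun k => if k = (i : ℕ) + 1 then
      (if (j : ℕ) + 1 = i then c k else 0) else 0), Finset.sum_ite_eq']
  · simp only [Finset.mem_Icc]
    split_ifs <;> first | rfl | omega
  · intro k hk
    rw [Finset.mem_Icc] at hk
    simp only [Matrix.smul_apply, E_apply, Fin.val_natCast, smul_eq_mul, mul_ite, mul_one, mul_zero,
      Nat.mod_eq_of_lt (show k - 1 < n + 1 by omega),
      Nat.mod_eq_of_lt (show k - 2 < n + 1 by omega)]
    split_ifs <;> first | rfl | omega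

/-- The basis vectors `e₃, …, e_n` in 1-based indexing. -/
def middleIndices (n : ℕ) : Set (Fin (n+1)) := {j | 2 ≤ (j : ℕ) ∧ (j : ℕ) < n}

/-- `e₁ + e₂ + (2a)⁻¹ e_{n+1}` in the 1-based indexing of `Y1`, `Y2`: a common left eigenvector
of both, for the eigenvalue `2a`. -/
def leftEigvec (n : ℕ) (a : ℂ) : Fin (n+1) → ℂ :=
  Pi.single 0 1 + Pi.single 1 1 + Pi.single (Fin.last n) (2 * a)⁻¹

lemma mul_apply_three_two_eq_zero (hn : 3 ≤ n) {X Y : Matrix (Fin (n+1)) (Fin (n+1)) ℂ}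
    (hX : X.IsStrictLowerOn (middleIndices n)) (hY : Y.IsStrictLowerOn (middleIndices n)) :
    (X * Y) 3 2 = 0 := by
  refine hX.mul_apply_eq_zero hY ?_ fun k _ h2k h3k => ?_ <;>
    simp (disch := omega) only [middleIndices, Set.mem_ofPred_eq, Fin.lt_def, Fin.coe_ofNat_eq_mod,
      Nat.mod_eq_of_lt] at * <;> omega

def ambient (n : ℕ) (a : ℂ) : LieSubalgebra ℂ (Matrix (Fin (n+1)) (Fin (n+1)) ℂ) :=
  strictLowerOnLieSubalgebra ℂ (middleIndices n) ⊓
    lieSubalgebraOfSubalgebra ℂ _ (leftEigenSubalgebra (leftEigvec n a))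

def defect (n : ℕ) (a : ℂ) : Matrix (Fin (n+1)) (Fin (n+1)) ℂ →ₗ[ℂ] ℂ where
  toFun X := 4 * a * X 3 2 - (leftEigvec n a ᵥ* X) 0
  map_add' X Y := by simp only [Matrix.add_apply, Matrix.vecMul_add, Pi.add_apply]; ring
  map_smul' c X := by
    simp only [Matrix.smul_apply, Matrix.vecMul_smul, Pi.smul_apply, smul_eq_mul,
      RingHom.id_apply]
    ring

lemma defect_apply (X : Matrix (Fin (n+1)) (Fin (n+1)) ℂ) :
    defect n a X = 4 * a * X 3 2 - (leftEigvec n a ᵥ* X) 0 := rfl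

lemma defect_lie (hn : 3 ≤ n) :
    ∀ X ∈ ambient n a, ∀ Y ∈ ambient n a, defect n a ⁅X, Y⁆ = 0 := by
  rintro X ⟨hXl, c, hXe⟩ Y ⟨hYl, d, hYe⟩
  rw [defect_apply, Matrix.vecMul_lie_eq_zero hXe hYe, Ring.lie_def, Matrix.sub_apply,
    mul_apply_three_two_eq_zero hn hXl hYl, mul_apply_three_two_eq_zero hn hYl hXl]
  simp

def separating (hn : 3 ≤ n) (a : ℂ) : LieSubalgebra ℂ (Matrix (Fin (n+1)) (Fin (n+1)) ℂ) :=
  (ambient n a).restrictKer (defect n a) (defect_lie hn)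

lemma leftEigvec_zero (hn : n ≠ 0) : leftEigvec n a 0 = 1 := by
  simp [leftEigvec, Fin.ext_iff, hn, Ne.symm hn]

lemma mem_separating_of (hn : 3 ≤ n) {X : Matrix (Fin (n+1)) (Fin (n+1)) ℂ}
    (hl : X.IsStrictLowerOn (middleIndices n))
    (he : leftEigvec n a ᵥ* X = (2 * a) • leftEigvec n a)
    (h32 : X 3 2 = 1 / 2) : X ∈ separating hn a :=
  ⟨⟨hl, 2 * a, he⟩, by
    rw [defect_apply, he, h32, Pi.smul_apply, leftEigvec_zero (by omega)]
    ring⟩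

lemma Y1_isStrictLowerOn (hn : 4 ≤ n) : (Y1 n a α β).IsStrictLowerOn (middleIndices n) := by
  intro i j hj hij
  simp only [middleIndices, Set.mem_ofPred_eq, Fin.lt_def] at hj hij
  simp (disch := omega) [Y1, sum_Icc_smul_E_apply, E_apply, Fin.coe_ofNat_eq_mod,
    Nat.mod_eq_of_lt, if_neg]

lemma Y2_isStrictLowerOn (hn : 4 ≤ n) : (Y2 n a α β).IsStrictLowerOn (middleIndices n) := by
  intro i j hj hij
  simp only [middleIndices, Set.mem_ofPred_eq, Fin.lt_def] at hj hij
  simp (disch := omega) [Y2, sum_Icc_smul_E_apply, E_apply, Fin.coe_ofNat_eq_mod,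
    Nat.mod_eq_of_lt, if_neg]

lemma Y1_apply_three_two (hn : 4 ≤ n) : Y1 n a α β 3 2 = 1 / 2 := by
  simp (disch := omega) only [Y1, Matrix.add_apply, Matrix.smul_apply, sum_Icc_smul_E_apply,
    E_apply, Fin.coe_ofNat_eq_mod, Fin.val_last, Nat.mod_eq_of_lt, if_neg]
  norm_num [show 3 < n by omega]

lemma Y2_apply_three_two (hn : 4 ≤ n) : Y2 n a α β 3 2 = 1 / 2 := by
  simp (disch := omega) only [Y2, Matrix.add_apply, Matrix.sub_apply, Matrix.smul_apply,
    sum_Icc_smul_E_apply, E_apply, Fin.coe_ofNat_eq_mod, Fin.val_last, Nat.mod_eq_of_lt, if_neg]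
  norm_num [show 3 < n by omega]

lemma leftEigvec_vecMul_Y1 (hn : 4 ≤ n) (ha : a ≠ 0) :
    leftEigvec n a ᵥ* Y1 n a α β = (2 * a) • leftEigvec n a := by
  ext j
  simp only [leftEigvec, Matrix.add_vecMul, Matrix.single_vecMul]
  simp (disch := omega) only [Y1, Pi.add_apply, Pi.smul_apply, Matrix.row_apply, Matrix.add_apply,
    Matrix.smul_apply, sum_Icc_smul_E_apply, E_apply, Fin.coe_ofNat_eq_mod, Fin.val_last,
    Fin.val_natCast, Nat.mod_eq_of_lt, smul_eq_mul, Pi.single_apply, Fin.ext_iff, if_neg, true_and,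
    one_mul, mul_zero, add_zero, zero_add]
  split_ifs <;> first | omega | (field_simp; ring)

lemma leftEigvec_vecMul_Y2 (hn : 4 ≤ n) (ha : a ≠ 0) :
    leftEigvec n a ᵥ* Y2 n a α β = (2 * a) • leftEigvec n a := by
  ext j
  simp only [leftEigvec, Matrix.add_vecMul, Matrix.single_vecMul]
  simp (disch := omega) only [Y2, Pi.add_apply, Pi.smul_apply, Matrix.row_apply, Matrix.add_apply,
    Matrix.sub_apply, Matrix.smul_apply, sum_Icc_smul_E_apply, E_apply, Fin.coe_ofNat_eq_mod,
    Fin.val_last, Fin.val_natCast, Nat.mod_eq_of_lt, smul_eq_mul, Pi.single_apply, Fin.ext_iff,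
    if_neg, true_and, one_mul, mul_zero, add_zero, zero_add, sub_zero]
  split_ifs <;> first | omega | (field_simp; ring)

lemma defect_semisimplePart (hn : 4 ≤ n) (ha : a ≠ 0) :
    defect n a (((2 * a) ^ (n - 3))⁻¹ • Y1 n a α β ^ (n - 2)) = -(2 * a) := by
  have hpow : n - 2 = (n - 3) + 1 := by omega
  have h32 : (Y1 n a α β ^ (n - 2)) 3 2 = 0 := by
    rw [hpow, pow_succ]
    exact mul_apply_three_two_eq_zero (by omega) ((Y1_isStrictLowerOn hn).pow (by omega))
      (Y1_isStrictLowerOn hn)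
  rw [defect_apply, Matrix.smul_apply, h32, Matrix.vecMul_smul,
    Matrix.vecMul_pow_of_vecMul_eq_smul (leftEigvec_vecMul_Y1 hn ha), Pi.smul_apply, Pi.smul_apply,
    leftEigvec_zero (by omega), hpow, pow_succ, smul_zero, smul_eq_mul, smul_eq_mul, mul_one,
    inv_mul_cancel_left₀ (pow_ne_zero _ (mul_ne_zero two_ne_zero ha))]
  ring

end SemisimplePartNotInLieSpan

open SemisimplePartNotInLieSpan in
/-- The semisimple part S = (2a)^{−(n−3)}·Y1^{n−2} of Y1 does not belong to the
Lie subalgebra of gl(n+1,ℂ) generated by Y1 and Y2. -/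
theorem semisimple_part_not_in_lieSpan (n : ℕ) (hn : 4 ≤ n) (a α β : ℂ) (ha : a ≠ 0) :
    ((2 * a) ^ (n - 3))⁻¹ • Y1 n a α β ^ (n - 2)
      ∉ LieSubalgebra.lieSpan ℂ (Matrix (Fin (n+1)) (Fin (n+1)) ℂ)
          {Y1 n a α β, Y2 n a α β} := by
  have hn3 : 3 ≤ n := by omega
  have hspan : LieSubalgebra.lieSpan ℂ _ {Y1 n a α β, Y2 n a α β} ≤ separating hn3 a := by
    rw [LieSubalgebra.lieSpan_le]
    rintro _ (rfl | rfl)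
    · exact mem_separating_of hn3 (Y1_isStrictLowerOn hn) (leftEigvec_vecMul_Y1 hn ha)
        (Y1_apply_three_two hn)
    · exact mem_separating_of hn3 (Y2_isStrictLowerOn hn) (leftEigvec_vecMul_Y2 hn ha)
        (Y2_apply_three_two hn)
  intro hS
  have h := (hspan hS).2
  rw [defect_semisimplePart hn ha, neg_eq_zero] at h
  exact ha ((mul_eq_zero.mp h).resolve_left two_ne_zero)
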